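/- Let S be the 3-dimensional simple Lie algebra over a field of characteristic 2 with brackets [e,h]=e, [f,h]=f, [e,f]=h, and let A be a commutative associative unital algebra over that field. Then the center of the current Lie algebra S ⊗ A is zero. -/
import Mathlib


/-- The bracket of the current Lie algebra `S ⊗ A`, where `S` is the
3-dimensional simple Lie algebra with basis `e, h, f` and `[e,h]=e`,
`[f,h]=f`, `[e,f]=h`, identified with `Fin 3 → A` via
`e⊗a ↦ (a,0,0)`, `h⊗a ↦ (0,a,0)`, `f⊗a ↦ (0,0,a)`. -/
def SbrA (A : Type*) [CommRing A] (x y : Fin 3 → A) : Fin 3 → A :=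
  ![x 0 * y 1 + x 1 * y 0, x 0 * y 2 + x 2 * y 0, x 2 * y 1 + x 1 * y 2]

/-- If `S` is the 3-dimensional simple Lie algebra over a field of
characteristic 2 and `A` is a commutative associative unital algebra, then
the center of the current Lie algebra `S ⊗ A` is zero. -/
theorem stmt14 (K : Type*) [Field K] [CharP K 2]
    (A : Type*) [CommRing A] [Algebra K A]
    (z : Fin 3 → A) (hz : ∀ x : Fin 3 → A, SbrA A z x = 0) : z = 0 := by
  have h1 := hz ![1, 0, 0]
  have h2 := hz ![0, 1, 0]
  simp [SbrA, funext_iff, Fin.forall_fin_succ] at h1 h2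
  funext i
  fin_cases i <;> simp [h1, h2]
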